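/- Let k ≥ 1 be an integer, h > 0, and a ∈ ℝ. Consider the cell I = [a, a+h] and the central stencil of 2k−1 contiguous cells with interfaces y_j = a − (k−1)·h + j·h for j = 0, …, 2k−1, covering [a − (k−1)·h, a + k·h]. Let e : [a − (k−1)·h, a + k·h] → ℝ be 2k-times continuously differentiable, and let q be the reconstruction polynomial of e on this stencil. Then there exist points ξ₁, ξ₂ ∈ (a − (k−1)·h, a + k·h) such that q(a) = e(a) − (−1)^k · h^{2k−1} · (k!·(k−1)!/(2k)!) · e^{(2k−1)}(ξ₁) and q(a+h) = e(a+h) − (−1)^{k+1} · h^{2k−1} · (k!·(k−1)!/(2k)!) · e^{(2k−1)}(ξ₂). -/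

import Mathlib

open Set Polynomial intervalIntegral

/-!
Let `P` interpolate the primitive `U` at the `m + 1` interfaces `ν 0 < ⋯ < ν m`. Then `U - P`
vanishes at the interfaces, so by Rolle `e - P'` vanishes at `m` points strictly between them.
Adding to the interpolant `Q` a multiple `K • w` of the nodal polynomial `w` keeps the
interpolation property, and `K` can be chosen so that `e - P'` also vanishes at the interface
`ν i`. Repeated Rolle on these `m + 1` zeros gives `ξ` with `e⁽ᵐ⁾ ξ = K (m + 1)!`, i.e.
`Q' (ν i) = e (ν i) - w' (ν i) e⁽ᵐ⁾ ξ / (m + 1)!`. For equally spaced interfaces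
`w' (y₀ + i h) = (-1)^(m - i) i! (m - i)! hᵐ`, and `m = 2k - 1`, `i = k - 1, k` give the claim.
-/

theorem exists_finset_hasDerivAt_eq_zero {f f' : ℝ → ℝ} {c d : ℝ} (hf : ContinuousOn f (Icc c d))
    (hf' : ∀ x ∈ Ioo c d, HasDerivAt f (f' x) x) {n : ℕ} {t : Finset ℝ} (ht : ↑t ⊆ Icc c d)
    (hcard : t.card = n + 1) (hzero : ∀ x ∈ t, f x = 0) :
    ∃ t' : Finset ℝ, ↑t' ⊆ Ioo c d ∧ Disjoint t t' ∧ t'.card = n ∧ ∀ x ∈ t', f' x = 0 := by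
  set z := t.orderEmbOfFin hcard
  have hz : ∀ l, z l ∈ Icc c d := fun l => ht (t.orderEmbOfFin_mem hcard l)
  have hrolle : ∀ l : Fin n, ∃ ρ ∈ Ioo (z l.castSucc) (z l.succ), f' ρ = 0 := fun l =>
    exists_hasDerivAt_eq_zero (z.strictMono l.castSucc_lt_succ)
      (hf.mono (Icc_subset_Icc (hz _).1 (hz _).2))
      ((hzero _ (t.orderEmbOfFin_mem hcard _)).trans (hzero _ (t.orderEmbOfFin_mem hcard _)).symm)
      fun x hx => hf' x ⟨(hz _).1.trans_lt hx.1, hx.2.trans_le (hz _).2⟩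
  choose ρ hρ hρ0 using hrolle
  have hρ_mono : StrictMono ρ := fun l l' hll' =>
    calc ρ l < z l.succ := (hρ l).2
      _ ≤ z l'.castSucc := z.monotone (Fin.succ_le_castSucc_iff.mpr hll')
      _ < ρ l' := (hρ l').1
  refine ⟨Finset.univ.image ρ, ?_, ?_, ?_, ?_⟩
  · intro x hx
    obtain ⟨l, -, rfl⟩ := Finset.mem_image.mp hx
    exact ⟨(hz _).1.trans_lt (hρ l).1, (hρ l).2.trans_le (hz _).2⟩
  · rw [Finset.disjoint_left, ← t.image_orderEmbOfFin_univ hcard]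
    intro x hx hx'
    obtain ⟨l', -, rfl⟩ := Finset.mem_image.mp hx
    obtain ⟨l, -, hl⟩ := Finset.mem_image.mp hx'
    have h₁ : l.castSucc < l' := z.lt_iff_lt.mp (hl ▸ (hρ l).1)
    have h₂ : l' < l.succ := z.lt_iff_lt.mp (hl ▸ (hρ l).2)
    rw [Fin.lt_def] at h₁ h₂
    simp only [Fin.val_castSucc, Fin.val_succ] at h₁ h₂
    omega
  · rw [Finset.card_image_of_injective _ hρ_mono.injective, Finset.card_univ, Fintype.card_fin]
  · intro x hx
    obtain ⟨l, -, rfl⟩ := Finset.mem_image.mp hx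
    exact hρ0 l

theorem hasDerivAt_derivWithin_Icc {f : ℝ → ℝ} {c d x : ℝ} (hf : DifferentiableOn ℝ f (Icc c d))
    (hx : x ∈ Ioo c d) : HasDerivAt f (derivWithin f (Icc c d) x) x := by
  have hnhds := Icc_mem_nhds hx.1 hx.2
  rw [derivWithin_of_mem_nhds hnhds]
  exact hf.hasDerivAt hnhds

theorem exists_iteratedDerivWithin_eq_zero {c d : ℝ} (hcd : c < d) {n : ℕ} {f : ℝ → ℝ}
    (hf : ContDiffOn ℝ (n + 1) f (Icc c d)) {t : Finset ℝ} (ht : ↑t ⊆ Icc c d)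
    (hcard : t.card = n + 2) (hzero : ∀ x ∈ t, f x = 0) :
    ∃ ξ ∈ Ioo c d, iteratedDerivWithin (n + 1) f (Icc c d) ξ = 0 := by
  induction n generalizing f t with
  | zero =>
    obtain ⟨t', ht', -, hcard', hzero'⟩ := exists_finset_hasDerivAt_eq_zero hf.continuousOn
      (fun x => hasDerivAt_derivWithin_Icc (hf.differentiableOn (by simp))) ht hcard hzero
    obtain ⟨ξ, rfl⟩ := Finset.card_eq_one.mp hcard'
    refine ⟨ξ, ht' (Finset.mem_singleton_self ξ), ?_⟩
    rw [iteratedDerivWithin_one]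
    exact hzero' ξ (Finset.mem_singleton_self ξ)
  | succ n ih =>
    obtain ⟨t', ht', -, hcard', hzero'⟩ := exists_finset_hasDerivAt_eq_zero hf.continuousOn
      (fun x => hasDerivAt_derivWithin_Icc (hf.differentiableOn (by simp))) ht hcard hzero
    rw [iteratedDerivWithin_succ']
    exact ih (hf.derivWithin (uniqueDiffOn_Icc hcd) le_rfl) (ht'.trans Ioo_subset_Icc_self)
      hcard' hzero'

theorem Polynomial.iteratedDeriv_eval {𝕜 : Type*} [NontriviallyNormedField 𝕜] (p : 𝕜[X])
    (n : ℕ) : iteratedDeriv n (fun x => p.eval x) = fun x => (derivative^[n] p).eval x := by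
  induction n generalizing p with
  | zero => simp
  | succ n ih =>
    have hderiv : _root_.deriv (fun x => p.eval x) = fun x => p.derivative.eval x :=
      _root_.funext fun _ => p.deriv
    rw [iteratedDeriv_succ', hderiv, ih, Function.iterate_succ_apply]

theorem Polynomial.contDiff_eval {𝕜 : Type*} [NontriviallyNormedField 𝕜] (p : 𝕜[X])
    (n : WithTop ℕ∞) : ContDiff 𝕜 n fun x => p.eval x := by
  simpa [aeval_def] using p.contDiff_aeval (𝕜 := 𝕜) n

theorem Polynomial.iteratedDerivWithin_eval {𝕜 : Type*} [NontriviallyNormedField 𝕜] (p : 𝕜[X])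
    (n : ℕ) {s : Set 𝕜} {x : 𝕜} (hs : UniqueDiffOn 𝕜 s) (hx : x ∈ s) :
    iteratedDerivWithin n (fun x => p.eval x) s x = (derivative^[n] p).eval x := by
  rw [iteratedDerivWithin_eq_iteratedDeriv hs (p.contDiff_eval n).contDiffAt hx,
    p.iteratedDeriv_eval]

theorem Polynomial.Monic.iterate_derivative_natDegree {R : Type*} [Semiring R] {p : R[X]}
    (hp : p.Monic) : derivative^[p.natDegree] p = C (p.natDegree.factorial : R) := by
  have hdeg : (derivative^[p.natDegree] p).natDegree = 0 := by
    have := natDegree_iterate_derivative p p.natDegree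
    omega
  rw [eq_C_of_natDegree_eq_zero hdeg, coeff_iterate_derivative, zero_add, hp.coeff_natDegree,
    Nat.descFactorial_self, nsmul_one]

theorem prod_range_natCast_sub {R : Type*} [CommRing R] (i : ℕ) :
    ∏ j ∈ Finset.range i, ((i : R) - j) = i.factorial := by
  rw [← descPochhammer_eval_eq_prod_range, descPochhammer_eval_eq_descFactorial,
    Nat.descFactorial_self]

theorem prod_Ico_natCast_sub {R : Type*} [CommRing R] (i n : ℕ) :
    ∏ j ∈ Finset.Ico (i + 1) (n + 1), ((i : R) - j) = (-1) ^ (n - i) * (n - i).factorial := by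
  have hfactor : ∀ t ∈ Finset.range (n - i), (i : R) - ↑(i + 1 + t) = -1 * ↑(t + 1) :=
    fun t _ => by push_cast; ring
  rw [Finset.prod_Ico_eq_prod_range, show n + 1 - (i + 1) = n - i by omega,
    Finset.prod_congr rfl hfactor, Finset.prod_mul_distrib, Finset.prod_const, Finset.card_range,
    ← Nat.cast_prod, Finset.prod_range_add_one_eq_factorial]

theorem prod_erase_range_natCast_sub {R : Type*} [CommRing R] {i n : ℕ} (hi : i ≤ n) :
    ∏ j ∈ (Finset.range (n + 1)).erase i, ((i : R) - j)
      = (-1) ^ (n - i) * i.factorial * (n - i).factorial := by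
  have hsplit : (Finset.range (n + 1)).erase i = Finset.range i ∪ Finset.Ico (i + 1) (n + 1) := by
    ext j
    simp only [Finset.mem_erase, Finset.mem_range, Finset.mem_union, Finset.mem_Ico]
    omega
  have hdisj : Disjoint (Finset.range i) (Finset.Ico (i + 1) (n + 1)) := by
    rw [Finset.disjoint_left]
    intro j hj hj'
    simp only [Finset.mem_range, Finset.mem_Ico] at hj hj'
    omega
  rw [hsplit, Finset.prod_union hdisj, prod_range_natCast_sub, prod_Ico_natCast_sub]
  ring

theorem eval_derivative_nodal_equispaced {R : Type*} [CommRing R] (y₀ h : R) {n i : ℕ}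
    (hi : i ≤ n) :
    (derivative (Lagrange.nodal (Finset.range (n + 1)) fun j : ℕ => y₀ + j * h)).eval (y₀ + i * h)
      = (-1) ^ (n - i) * i.factorial * (n - i).factorial * h ^ n := by
  have hmem : i ∈ Finset.range (n + 1) := Finset.mem_range.mpr (by omega)
  have hfactor : ∀ j ∈ (Finset.range (n + 1)).erase i,
      y₀ + i * h - (y₀ + j * h) = ((i : R) - j) * h := fun j _ => by ring
  have hnode := Lagrange.eval_nodal_derivative_eval_node_eq (v := fun j : ℕ => y₀ + j * h) hmem
  beta_reduce at hnode
  rw [hnode, Lagrange.eval_nodal,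
    Finset.prod_congr rfl hfactor, Finset.prod_mul_distrib, prod_erase_range_natCast_sub hi,
    Finset.prod_const, Finset.card_erase_of_mem hmem, Finset.card_range, Nat.add_sub_cancel]

theorem exists_iteratedDerivWithin_eq_of_interpolates {m : ℕ} (hm : m ≠ 0) {ν : ℕ → ℝ}
    (hν : StrictMono ν) {e U : ℝ → ℝ} (he : ContDiffOn ℝ m e (Icc (ν 0) (ν m)))
    (hUc : ContinuousOn U (Icc (ν 0) (ν m))) (hU : ∀ x ∈ Ioo (ν 0) (ν m), HasDerivAt U (e x) x)
    {P : ℝ[X]} (hP : ∀ j ≤ m, P.eval (ν j) = U (ν j)) {i : ℕ} (hi : i ≤ m)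
    (hP' : (derivative P).eval (ν i) = e (ν i)) :
    ∃ ξ ∈ Ioo (ν 0) (ν m),
      iteratedDerivWithin m e (Icc (ν 0) (ν m)) ξ = (derivative^[m + 1] P).eval ξ := by
  obtain ⟨n, rfl⟩ : ∃ n, m = n + 1 := ⟨m - 1, by omega⟩
  have hs : UniqueDiffOn ℝ (Icc (ν 0) (ν (n + 1))) := uniqueDiffOn_Icc (hν n.succ_pos)
  have hnode : ∀ {j}, j ≤ n + 1 → ν j ∈ Icc (ν 0) (ν (n + 1)) := fun hj =>
    ⟨hν.monotone (Nat.zero_le _), hν.monotone hj⟩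
  have hnodes : ↑((Finset.range (n + 2)).image ν) ⊆ Icc (ν 0) (ν (n + 1)) := by
    intro x hx
    obtain ⟨j, hj, rfl⟩ := Finset.mem_image.mp hx
    exact hnode (Nat.lt_succ_iff.mp (Finset.mem_range.mp hj))
  obtain ⟨t, ht, hdisj, hcard, hzero⟩ := exists_finset_hasDerivAt_eq_zero
    (f := fun x => U x - P.eval x) (f' := fun x => e x - (derivative P).eval x)
    (hUc.sub P.continuousOn) (fun x hx => (hU x hx).sub (P.hasDerivAt x)) hnodes
    (by rw [Finset.card_image_of_injective _ hν.injective, Finset.card_range])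
    (by
      intro x hx
      obtain ⟨j, hj, rfl⟩ := Finset.mem_image.mp hx
      rw [hP j (Nat.lt_succ_iff.mp (Finset.mem_range.mp hj)), sub_self])
  have hνi : ν i ∉ t :=
    Finset.disjoint_left.mp hdisj (Finset.mem_image_of_mem ν (Finset.mem_range.mpr (by omega)))
  obtain ⟨ξ, hξ, hξ0⟩ := exists_iteratedDerivWithin_eq_zero (hν n.succ_pos)
    (he.sub (P.derivative.contDiff_eval _).contDiffOn) (t := insert (ν i) t)
    (by
      rw [Finset.coe_insert]
      exact insert_subset (hnode hi) (ht.trans Ioo_subset_Icc_self))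
    (by rw [Finset.card_insert_of_notMem hνi, hcard])
    (by
      intro x hx
      rcases Finset.mem_insert.mp hx with rfl | hx
      · exact sub_eq_zero.mpr hP'.symm
      · exact hzero x hx)
  have hξs := Ioo_subset_Icc_self hξ
  refine ⟨ξ, hξ, ?_⟩
  rw [← sub_eq_zero, Function.iterate_succ_apply,
    ← P.derivative.iteratedDerivWithin_eval _ hs hξs,
    ← iteratedDerivWithin_sub hξs hs (he.contDiffWithinAt hξs)
      (P.derivative.contDiff_eval _).contDiffWithinAt]
  exact hξ0

theorem exists_eval_derivative_eq_of_interpolates {m : ℕ} (hm : m ≠ 0) {ν : ℕ → ℝ}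
    (hν : StrictMono ν) {e U : ℝ → ℝ} (he : ContDiffOn ℝ m e (Icc (ν 0) (ν m)))
    (hUc : ContinuousOn U (Icc (ν 0) (ν m))) (hU : ∀ x ∈ Ioo (ν 0) (ν m), HasDerivAt U (e x) x)
    {Q : ℝ[X]} (hdeg : Q.natDegree ≤ m) (hinterp : ∀ j ≤ m, Q.eval (ν j) = U (ν j))
    {i : ℕ} (hi : i ≤ m) :
    ∃ ξ ∈ Ioo (ν 0) (ν m), (derivative Q).eval (ν i) = e (ν i) -
      (derivative (Lagrange.nodal (Finset.range (m + 1)) ν)).eval (ν i) / (m + 1).factorial *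
        iteratedDerivWithin m e (Icc (ν 0) (ν m)) ξ := by
  set w := Lagrange.nodal (Finset.range (m + 1)) ν with hw
  have hi_mem : i ∈ Finset.range (m + 1) := Finset.mem_range.mpr (by omega)
  have hD : (derivative w).eval (ν i) ≠ 0 := by
    have := Lagrange.nodalWeight_ne_zero hν.injective.injOn hi_mem
    rwa [Lagrange.nodalWeight_eq_eval_derivative_nodal hi_mem, ne_eq, inv_eq_zero] at this
  set K := (e (ν i) - (derivative Q).eval (ν i)) / (derivative w).eval (ν i) with hK
  have hP : ∀ j ≤ m, (Q + C K * w).eval (ν j) = U (ν j) := fun j hj => by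
    rw [eval_add, eval_mul, hw, Lagrange.eval_nodal_at_node (Finset.mem_range.mpr (by omega)),
      mul_zero, add_zero, hinterp j hj]
  have hP' : (derivative (Q + C K * w)).eval (ν i) = e (ν i) := by
    rw [derivative_add, derivative_C_mul, eval_add, eval_mul, eval_C, hK]
    field_simp
    ring
  have hw_iter : derivative^[m + 1] w = C ((m + 1).factorial : ℝ) := by
    have := (Lagrange.nodal_monic (s := Finset.range (m + 1)) (v := ν)).iterate_derivative_natDegree
    rwa [Lagrange.natDegree_nodal, Finset.card_range] at this
  obtain ⟨ξ, hξ, hξe⟩ := exists_iteratedDerivWithin_eq_of_interpolates hm hν he hUc hU hP hi hP'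
  rw [iterate_map_add, iterate_derivative_eq_zero (by omega), zero_add, iterate_derivative_C_mul,
    hw_iter, ← C_mul, eval_C] at hξe
  refine ⟨ξ, hξ, ?_⟩
  rw [hξe, hK]
  field_simp
  ring

theorem continuousOn_integral_of_continuousOn {e : ℝ → ℝ} {c d : ℝ} (hcd : c ≤ d)
    (he : ContinuousOn e (Icc c d)) : ContinuousOn (fun u => ∫ s in c..u, e s) (Icc c d) := by
  rw [← uIcc_of_le hcd] at he ⊢
  exact continuousOn_primitive_interval he.integrableOn_uIcc

theorem hasDerivAt_integral_of_continuousOn {e : ℝ → ℝ} {c d x : ℝ}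
    (he : ContinuousOn e (Icc c d)) (hx : x ∈ Ioo c d) :
    HasDerivAt (fun u => ∫ s in c..u, e s) (e x) x :=
  integral_hasDerivAt_right
    ((he.mono (Icc_subset_Icc le_rfl hx.2.le)).intervalIntegrable_of_Icc hx.1.le)
    ((he.mono Ioo_subset_Icc_self).stronglyMeasurableAtFilter isOpen_Ioo x hx)
    (he.continuousAt (Icc_mem_nhds hx.1 hx.2))

theorem exists_eval_derivative_eq_of_interpolates_integral {m : ℕ} (hm : m ≠ 0) {y₀ h : ℝ}
    (hh : 0 < h) {e : ℝ → ℝ} (he : ContDiffOn ℝ m e (Icc y₀ (y₀ + m * h))) {Q : ℝ[X]}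
    (hdeg : Q.natDegree ≤ m)
    (hinterp : ∀ j ≤ m, Q.eval (y₀ + j * h) = ∫ s in y₀..y₀ + j * h, e s) {i : ℕ} (hi : i ≤ m) :
    ∃ ξ ∈ Ioo y₀ (y₀ + m * h), (derivative Q).eval (y₀ + i * h) = e (y₀ + i * h) -
      (-1) ^ (m - i) * i.factorial * (m - i).factorial * h ^ m / (m + 1).factorial *
        iteratedDerivWithin m e (Icc y₀ (y₀ + m * h)) ξ := by
  have hν : StrictMono fun j : ℕ => y₀ + j * h := fun j j' hjj' => by
    have : (j : ℝ) < j' := by exact_mod_cast hjj'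
    simp only
    gcongr
  have hle : y₀ ≤ y₀ + m * h := by
    have : (0 : ℝ) ≤ m * h := by positivity
    linarith
  have hs : Icc (y₀ + (0 : ℕ) * h) (y₀ + m * h) = Icc y₀ (y₀ + m * h) := by simp
  obtain ⟨ξ, hξ, hQ⟩ := exists_eval_derivative_eq_of_interpolates hm hν (hs ▸ he)
    (hs ▸ continuousOn_integral_of_continuousOn hle he.continuousOn)
    (fun x hx => hasDerivAt_integral_of_continuousOn he.continuousOn (by simpa using hx))
    hdeg hinterp hi
  refine ⟨ξ, by simpa using hξ, ?_⟩
  rw [hQ, hs, eval_derivative_nodal_equispaced y₀ h hi]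

/-- Error estimates at the two interfaces of cell `[a, a+h]` for the
finite-volume reconstruction polynomial on the central stencil of `2k-1` cells. -/
theorem central_reconstruction_error
    (k : ℕ) (hk : 1 ≤ k) (h a : ℝ) (hh : 0 < h)
    (e : ℝ → ℝ)
    (he : ContDiffOn ℝ (2 * k) e (Icc (a - ((k : ℝ) - 1) * h) (a + k * h)))
    (U : ℝ → ℝ) (hU : ∀ x, U x = ∫ s in (a - ((k : ℝ) - 1) * h)..x, e s)
    (Q : Polynomial ℝ) (hdeg : Q.natDegree ≤ 2 * k - 1)
    (hinterp : ∀ j ∈ Finset.range (2 * k),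
      Q.eval (a - ((k : ℝ) - 1) * h + j * h) = U (a - ((k : ℝ) - 1) * h + j * h)) :
    (∃ ξ₁ ∈ Ioo (a - ((k : ℝ) - 1) * h) (a + k * h),
      (Polynomial.derivative Q).eval a
        = e a - (-1 : ℝ) ^ k * h ^ (2 * k - 1)
            * ((Nat.factorial k : ℝ) * (Nat.factorial (k - 1)) / (Nat.factorial (2 * k)))
            * iteratedDerivWithin (2 * k - 1) e (Icc (a - ((k : ℝ) - 1) * h) (a + k * h)) ξ₁) ∧
    (∃ ξ₂ ∈ Ioo (a - ((k : ℝ) - 1) * h) (a + k * h),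
      (Polynomial.derivative Q).eval (a + h)
        = e (a + h) - (-1 : ℝ) ^ (k + 1) * h ^ (2 * k - 1)
            * ((Nat.factorial k : ℝ) * (Nat.factorial (k - 1)) / (Nat.factorial (2 * k)))
            * iteratedDerivWithin (2 * k - 1) e (Icc (a - ((k : ℝ) - 1) * h) (a + k * h)) ξ₂) := by
  set y₀ := a - ((k : ℝ) - 1) * h
  have hend : y₀ + ((2 * k - 1 : ℕ) : ℝ) * h = a + k * h := by
    rw [Nat.cast_sub (by omega)]
    push_cast
    ring
  have he' : ContDiffOn ℝ (2 * k - 1 : ℕ) e (Icc y₀ (y₀ + ((2 * k - 1 : ℕ) : ℝ) * h)) := by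
    rw [hend]
    exact he.of_le (by exact_mod_cast Nat.sub_le _ _)
  have hinterp' : ∀ j ≤ 2 * k - 1, Q.eval (y₀ + j * h) = ∫ s in y₀..y₀ + j * h, e s :=
    fun j hj => (hinterp j (Finset.mem_range.mpr (by omega))).trans (hU _)
  have key := fun i (hi : i ≤ 2 * k - 1) =>
    exists_eval_derivative_eq_of_interpolates_integral (by omega) hh he' hdeg hinterp' hi
  rw [hend, show 2 * k - 1 + 1 = 2 * k by omega] at key
  obtain ⟨ξ₁, hξ₁, h₁⟩ := key (k - 1) (by omega)
  obtain ⟨ξ₂, hξ₂, h₂⟩ := key k (by omega)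
  have ha : y₀ + ((k - 1 : ℕ) : ℝ) * h = a := by
    rw [Nat.cast_sub hk]
    push_cast
    ring
  have hah : y₀ + (k : ℝ) * h = a + h := by ring
  rw [ha, show 2 * k - 1 - (k - 1) = k by omega] at h₁
  rw [hah, show 2 * k - 1 - k = k - 1 by omega] at h₂
  refine ⟨⟨ξ₁, hξ₁, by rw [h₁]; ring⟩, ⟨ξ₂, hξ₂, ?_⟩⟩
  rw [h₂, show k + 1 = k - 1 + 2 by omega, pow_add]
  ring
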